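/- Consider the consensus-voting group process on the unit square ℍ = [0,1]². For each round t ≥ 1 let Aᵗ = {(x,y) ∈ ℍ : x + y ≤ 1/(4t^{1/4})}. Then there exist a constant c > 0 and a constant τ ∈ ℕ such that for all t ≥ τ, Pr[Sᵗ ∩ Aᵗ = ∅] ≥ c. -/

import Mathlib

open MeasureTheory Metric Set
open scoped RealInnerProductSpace ENNReal

noncomputable section

/-- Points of the plane (with the Euclidean norm). -/
abbrev Pt : Type := EuclideanSpace ℝ (Fin 2)

/-- The Voronoi cell of `w₁` (against competitor `w₂`) inside `K`. -/
def vcell (K : Set Pt) (w₁ w₂ : Pt) : Set Pt := {v ∈ K | dist v w₁ ≤ dist v w₂}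

/-- The acceptance event `E_K(H, A)`: the set of candidate pairs `(w₁, w₂) ∈ K × K` such
that some candidate `wᵢ` lies in `H` and `A` is contained in its Voronoi cell, i.e. a
candidate inside `H` is accepted when the convex hull of the group is `A`. -/
def accEvent (K H A : Set Pt) : Set (Pt × Pt) :=
  {p | p.1 ∈ K ∧ p.2 ∈ K ∧
    ((p.1 ∈ H ∧ A ⊆ vcell K p.1 p.2) ∨ (p.2 ∈ H ∧ A ⊆ vcell K p.2 p.1))}

/-- Every group member weakly prefers candidate `w₁` to candidate `w₂`. -/
def Accepts (G : Set Pt) (w₁ w₂ : Pt) : Prop := ∀ v ∈ G, dist v w₁ ≤ dist v w₂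

open Classical in
/-- One round of the consensus-voting process: given the current group `G` and a pair of
candidates `c = (w₁, w₂)`, the unanimously preferred candidate (if any) joins the group. -/
def step (G : Set Pt) (c : Pt × Pt) : Set Pt :=
  if Accepts G c.1 c.2 then insert c.1 G
  else if Accepts G c.2 c.1 then insert c.2 G
  else G

/-- The group after `t` rounds, from initial members `init` and candidate pairs `c`. -/
def grp {k : ℕ} (init : Fin k → Pt) (c : ℕ → Pt × Pt) : ℕ → Set Pt
  | 0 => Set.range init
  | t + 1 => step (grp init c t) (c t)

/-- Extend a `Fin T`-indexed sequence of candidate pairs to an `ℕ`-indexed one. -/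
def extSeq {T : ℕ} (c : Fin T → Pt × Pt) : ℕ → Pt × Pt :=
  fun n => if h : n < T then c ⟨n, h⟩ else 0

/-- The law of the randomness driving the first `T` rounds of the process: `k` i.i.d.
initial members with law `μ`, and `T` i.i.d. candidate pairs, each pair being two i.i.d.
points with law `μ`. -/
def procMeasure (μ : Measure Pt) (k T : ℕ) :
    Measure ((Fin k → Pt) × (Fin T → Pt × Pt)) :=
  (Measure.pi fun _ => μ).prod (Measure.pi fun _ => μ.prod μ)


/-- The unit square `[0,1]²` in the plane. -/
def unitSquare : Set Pt := {x : Pt | ∀ i, x i ∈ Set.Icc (0 : ℝ) 1}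

/-!
With probability `1/16` the first initial member `v` lies in the corner `[3/4,1]²`, and it never
leaves the group. If a candidate `w` with `w₀ + w₁ ≤ δ ≤ 1/8` is accepted, then `v` weakly prefers
`w` to its rival `w'`, which forces `w'₀ + w'₁ ≤ 2δ`; a round draws such a pair with probability
at most `8δ⁴`. So unless an initial member or such a pair falls near the origin, which has
probability at most `kδ² + 8tδ⁴`, the group, and hence its convex hull, stays in `x + y > δ`.
For `δ = 1/(4t^{1/4})` and `t ≥ 16(k+1)²` the bad probability is at most `3/64 < 1/16`.
-/

def upperCorner : Set Pt := {x | ∀ i, x i ∈ Icc (3/4 : ℝ) 1}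

def lowerHalfPlane (a : ℝ) : Set Pt := {x | x 0 + x 1 ≤ a}

def badPairs (δ : ℝ) : Set (Pt × Pt) :=
  lowerHalfPlane δ ×ˢ lowerHalfPlane (2 * δ) ∪ lowerHalfPlane (2 * δ) ×ˢ lowerHalfPlane δ

lemma convex_compl_lowerHalfPlane (a : ℝ) : Convex ℝ (lowerHalfPlane a)ᶜ := by
  simp only [lowerHalfPlane, compl_ofPred, not_le]
  exact convex_halfSpace_gt ⟨fun u v => by simp only [PiLp.add_apply]; ring,
    fun r u => by simp only [PiLp.smul_apply, smul_eq_mul]; ring⟩ a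

/-- With `s = a + b` and `s' = a' + b'`, expanding the squares turns the hypothesis into
`(3/2) s' - (a'² + b'²) ≤ 2 s`, and `a'² + b'² ≤ min (s', s'²)`. -/
lemma sum_le_two_mul_of_sq_add_sq_le {x y a b a' b' : ℝ}
    (hx : x ∈ Icc (3/4 : ℝ) 1) (hy : y ∈ Icc (3/4 : ℝ) 1) (ha : 0 ≤ a) (hb : 0 ≤ b)
    (ha' : a' ∈ Icc (0 : ℝ) 1) (hb' : b' ∈ Icc (0 : ℝ) 1) (hs : a + b ≤ 1/8)
    (hd : (x - a)^2 + (y - b)^2 ≤ (x - a')^2 + (y - b')^2) : a' + b' ≤ 2 * (a + b) := by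
  obtain ⟨hx, hx1⟩ := hx
  obtain ⟨hy, hy1⟩ := hy
  obtain ⟨ha', ha'1⟩ := ha'
  obtain ⟨hb', hb'1⟩ := hb'
  have hpref : 3/2 * (a' + b') - (a'^2 + b'^2) ≤ 2 * (a + b) := by
    nlinarith [mul_nonneg ha' (sub_nonneg.2 hx), mul_nonneg hb' (sub_nonneg.2 hy),
      mul_nonneg ha (sub_nonneg.2 hx1), mul_nonneg hb (sub_nonneg.2 hy1)]
  have hsq_le_sum : a'^2 + b'^2 ≤ a' + b' := by nlinarith
  have hsq_le_sq : a'^2 + b'^2 ≤ (a' + b')^2 := by nlinarith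
  by_cases h : a' + b' ≤ 1/2
  · nlinarith
  · linarith

lemma sum_le_two_mul_of_dist_le {v w w' : Pt} (hv : v ∈ upperCorner)
    (hw : w ∈ unitSquare) (hw' : w' ∈ unitSquare) (hs : w 0 + w 1 ≤ 1/8)
    (h : dist v w ≤ dist v w') : w' 0 + w' 1 ≤ 2 * (w 0 + w 1) := by
  have hsq := pow_le_pow_left₀ dist_nonneg h 2
  simp only [EuclideanSpace.dist_sq_eq, Fin.sum_univ_two, Real.dist_eq, sq_abs] at hsq
  exact sum_le_two_mul_of_sq_add_sq_le (hv 0) (hv 1) (hw 0).1 (hw 1).1 (hw' 0) (hw' 1) hs hsq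

lemma subset_step (G : Set Pt) (c : Pt × Pt) : G ⊆ step G c := by
  unfold step
  split_ifs <;> first | exact subset_insert _ _ | exact subset_rfl

lemma mem_step {G : Set Pt} {c : Pt × Pt} {v : Pt} (hv : v ∈ step G c) :
    v ∈ G ∨ (v = c.1 ∧ Accepts G c.1 c.2) ∨ (v = c.2 ∧ Accepts G c.2 c.1) := by
  unfold step at hv
  split_ifs at hv with h₁ h₂
  · exact (mem_insert_iff.1 hv).elim (fun h => Or.inr (Or.inl ⟨h, h₁⟩)) Or.inl
  · exact (mem_insert_iff.1 hv).elim (fun h => Or.inr (Or.inr ⟨h, h₂⟩)) Or.inl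
  · exact Or.inl hv

lemma range_subset_grp {k : ℕ} (init : Fin k → Pt) (c : ℕ → Pt × Pt) (t : ℕ) :
    range init ⊆ grp init c t := by
  induction t with
  | zero => exact subset_rfl
  | succ t ih => exact ih.trans (subset_step _ _)

lemma step_subset_compl_lowerHalfPlane {δ : ℝ} (hδ : δ ≤ 1/8) {G : Set Pt} {c : Pt × Pt}
    {v : Pt} (hv : v ∈ upperCorner) (hvG : v ∈ G) (hG : G ⊆ (lowerHalfPlane δ)ᶜ)
    (hc : c.1 ∈ unitSquare ∧ c.2 ∈ unitSquare) (hbad : c ∉ badPairs δ) :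
    step G c ⊆ (lowerHalfPlane δ)ᶜ := by
  intro w hw hwδ
  rcases mem_step hw with hwG | ⟨rfl, hacc⟩ | ⟨rfl, hacc⟩
  · exact hG hwG hwδ
  · have := sum_le_two_mul_of_dist_le hv hc.1 hc.2 (hwδ.trans hδ) (hacc v hvG)
    exact hbad (Or.inl ⟨hwδ, show _ ≤ 2 * δ by linarith [show c.1 0 + c.1 1 ≤ δ from hwδ]⟩)
  · have := sum_le_two_mul_of_dist_le hv hc.2 hc.1 (hwδ.trans hδ) (hacc v hvG)
    exact hbad (Or.inr ⟨show _ ≤ 2 * δ by linarith [show c.2 0 + c.2 1 ≤ δ from hwδ], hwδ⟩)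

lemma grp_subset_compl_lowerHalfPlane {δ : ℝ} (hδ : δ ≤ 1/8) {k : ℕ} {init : Fin k → Pt}
    {c : ℕ → Pt × Pt} {i₀ : Fin k} (hi₀ : init i₀ ∈ upperCorner) (hinit : ∀ i, init i ∉ lowerHalfPlane δ)
    {t : ℕ} (hc : ∀ s < t, (c s).1 ∈ unitSquare ∧ (c s).2 ∈ unitSquare)
    (hbad : ∀ s < t, c s ∉ badPairs δ) :
    grp init c t ⊆ (lowerHalfPlane δ)ᶜ := by
  induction t with
  | zero => rintro _ ⟨i, rfl⟩; exact hinit i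
  | succ t ih =>
    exact step_subset_compl_lowerHalfPlane hδ hi₀ (range_subset_grp init c t ⟨i₀, rfl⟩)
      (ih (fun s hs => hc s (hs.trans t.lt_succ_self)) fun s hs => hbad s (hs.trans t.lt_succ_self))
      (hc t t.lt_succ_self) (hbad t t.lt_succ_self)

lemma extSeq_of_lt {T : ℕ} (c : Fin T → Pt × Pt) {s : ℕ} (hs : s < T) :
    extSeq c s = c ⟨s, hs⟩ :=
  dif_pos hs

lemma convexHull_grp_inter_eq_empty {δ : ℝ} (hδ : δ ≤ 1/8) {k T : ℕ} {init : Fin k → Pt}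
    {c : Fin T → Pt × Pt} {i₀ : Fin k} (hi₀ : init i₀ ∈ upperCorner)
    (hinit : ∀ i, init i ∉ lowerHalfPlane δ)
    (hc : ∀ s, (c s).1 ∈ unitSquare ∧ (c s).2 ∈ unitSquare) (hbad : ∀ s, c s ∉ badPairs δ) :
    convexHull ℝ (grp init (extSeq c) T) ∩ {x ∈ unitSquare | x 0 + x 1 ≤ δ} = ∅ := by
  have hgrp := grp_subset_compl_lowerHalfPlane hδ hi₀ hinit
    (fun s hs => extSeq_of_lt c hs ▸ hc _) (fun s hs => extSeq_of_lt c hs ▸ hbad _)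
  rw [eq_empty_iff_forall_notMem]
  rintro x ⟨hx, -, hxδ⟩
  exact convexHull_min hgrp (convex_compl_lowerHalfPlane δ) hx hxδ

lemma MeasureTheory.Measure.pi_eval_preimage {ι X : Type*} [Fintype ι] [MeasurableSpace X]
    (μ : Measure X) [IsProbabilityMeasure μ] (i : ι) (S : Set X) :
    Measure.pi (fun _ : ι => μ) (Function.eval i ⁻¹' S) = μ S := by
  classical
  rw [eval_preimage, Measure.pi_pi]
  simp [Function.update_apply, apply_ite μ]

section procMeasure

variable {μ : Measure Pt} [IsProbabilityMeasure μ] {k T : ℕ}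

lemma procMeasure_init_mem (i : Fin k) (S : Set Pt) :
    procMeasure μ k T {ω | ω.1 i ∈ S} = μ S := by
  rw [show {ω : (Fin k → Pt) × (Fin T → Pt × Pt) | ω.1 i ∈ S} = (Function.eval i ⁻¹' S) ×ˢ univ
    by ext; simp, procMeasure, Measure.prod_prod, measure_univ, mul_one, Measure.pi_eval_preimage]

lemma procMeasure_round_mem (s : Fin T) (B : Set (Pt × Pt)) :
    procMeasure μ k T {ω | ω.2 s ∈ B} = (μ.prod μ) B := by
  rw [show {ω : (Fin k → Pt) × (Fin T → Pt × Pt) | ω.2 s ∈ B} = univ ×ˢ (Function.eval s ⁻¹' B)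
    by ext; simp, procMeasure, Measure.prod_prod, measure_univ, one_mul, Measure.pi_eval_preimage]

lemma procMeasure_exists_init_mem_le (S : Set Pt) :
    procMeasure μ k T {ω | ∃ i, ω.1 i ∈ S} ≤ k * μ S := by
  calc procMeasure μ k T {ω | ∃ i, ω.1 i ∈ S}
      ≤ ∑ i, procMeasure μ k T {ω | ω.1 i ∈ S} := by
        rw [ofPred_exists]; exact measure_iUnion_fintype_le _ _
    _ = k * μ S := by simp [procMeasure_init_mem]

lemma procMeasure_exists_round_mem_le (B : Set (Pt × Pt)) :
    procMeasure μ k T {ω | ∃ s, ω.2 s ∈ B} ≤ T * (μ.prod μ) B := by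
  calc procMeasure μ k T {ω | ∃ s, ω.2 s ∈ B}
      ≤ ∑ s, procMeasure μ k T {ω | ω.2 s ∈ B} := by
        rw [ofPred_exists]; exact measure_iUnion_fintype_le _ _
    _ = T * (μ.prod μ) B := by simp [procMeasure_round_mem]

lemma ae_procMeasure_mem {K : Set Pt} (hK : ∀ᵐ x ∂μ, x ∈ K) :
    ∀ᵐ ω ∂procMeasure μ k T, (∀ i, ω.1 i ∈ K) ∧ ∀ s, (ω.2 s).1 ∈ K ∧ (ω.2 s).2 ∈ K := by
  have hpair : ∀ᵐ p ∂μ.prod μ, p.1 ∈ K ∧ p.2 ∈ K :=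
    (Measure.quasiMeasurePreserving_fst.ae hK).and (Measure.quasiMeasurePreserving_snd.ae hK)
  have hinit : ∀ᵐ f ∂Measure.pi fun _ : Fin k => μ, ∀ i, f i ∈ K :=
    ae_all_iff.2 fun _ => Measure.tendsto_eval_ae_ae.eventually hK
  have hrounds : ∀ᵐ f ∂Measure.pi fun _ : Fin T => μ.prod μ, ∀ s, (f s).1 ∈ K ∧ (f s).2 ∈ K :=
    ae_all_iff.2 fun _ =>
      (Measure.tendsto_eval_ae_ae (μ := fun _ => μ.prod μ)).eventually hpair
  exact (Measure.quasiMeasurePreserving_fst.ae hinit).and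
    (Measure.quasiMeasurePreserving_snd.ae hrounds)

end procMeasure

lemma prod_badPairs_le {μ : Measure Pt} [SFinite μ]
    (hμ : ∀ a, 0 ≤ a → μ (lowerHalfPlane a) ≤ ENNReal.ofReal (a ^ 2)) {δ : ℝ} (hδ : 0 ≤ δ) :
    (μ.prod μ) (badPairs δ) ≤ ENNReal.ofReal (8 * δ ^ 4) := by
  have hδ' : μ (lowerHalfPlane δ) * μ (lowerHalfPlane (2 * δ)) ≤ ENNReal.ofReal (4 * δ ^ 4) :=
    calc _ ≤ ENNReal.ofReal (δ ^ 2) * ENNReal.ofReal ((2 * δ) ^ 2) :=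
          mul_le_mul' (hμ δ hδ) (hμ _ (by positivity))
      _ = ENNReal.ofReal (4 * δ ^ 4) := by
          rw [← ENNReal.ofReal_mul (by positivity)]; ring_nf
  calc (μ.prod μ) (badPairs δ)
      ≤ μ (lowerHalfPlane δ) * μ (lowerHalfPlane (2 * δ))
        + μ (lowerHalfPlane (2 * δ)) * μ (lowerHalfPlane δ) := by
        rw [← Measure.prod_prod, ← Measure.prod_prod]; exact measure_union_le _ _
    _ ≤ ENNReal.ofReal (4 * δ ^ 4) + ENNReal.ofReal (4 * δ ^ 4) := by
        rw [mul_comm (μ (lowerHalfPlane (2 * δ)))]; exact add_le_add hδ' hδ'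
    _ = ENNReal.ofReal (8 * δ ^ 4) := by
        rw [← ENNReal.ofReal_add (by positivity) (by positivity)]; ring_nf

lemma measure_upperCorner_le {μ : Measure Pt} [IsProbabilityMeasure μ]
    (hμ : ∀ᵐ x ∂μ, x ∈ unitSquare) {δ : ℝ} (hδ : δ ≤ 1/8) {k T : ℕ} (i₀ : Fin k) :
    μ upperCorner ≤ procMeasure μ k T
        {ω | convexHull ℝ (grp ω.1 (extSeq ω.2) T) ∩ {x ∈ unitSquare | x 0 + x 1 ≤ δ} = ∅}
      + k * μ (lowerHalfPlane δ) + T * (μ.prod μ) (badPairs δ) := by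
  rw [← procMeasure_init_mem (T := T) i₀]
  refine (measure_mono_ae ?_).trans ((measure_union_le _ _).trans
    (add_le_add ((measure_union_le _ _).trans (add_le_add_right
      (procMeasure_exists_init_mem_le _) _)) (procMeasure_exists_round_mem_le _)))
  filter_upwards [ae_procMeasure_mem hμ] with ω hsq hi₀
  by_contra hω
  change ω ∉ (_ ∪ _ ∪ _ : Set ((Fin k → Pt) × (Fin T → Pt × Pt))) at hω
  simp only [mem_union, mem_ofPred_eq, not_or, not_exists] at hω
  exact hω.1.1 (convexHull_grp_inter_eq_empty hδ hi₀ hω.1.2 hsq.2 hω.2)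

lemma one_div_four_mul_bounds {k r : ℝ} (hk : 0 ≤ k) (hr : 0 < r) (hrk : 16 * (k + 1) ^ 2 ≤ r ^ 4) :
    1 / (4 * r) ≤ 1/8 ∧ k * (1 / (4 * r)) ^ 2 ≤ 1/64 ∧ r ^ 4 * (8 * (1 / (4 * r)) ^ 4) = 1/32 := by
  have hr2 : 4 * (k + 1) ≤ r ^ 2 := by nlinarith [sq_nonneg (r ^ 2 - 4 * (k + 1))]
  refine ⟨?_, ?_, by field_simp; norm_num⟩
  · rw [div_le_div_iff₀ (by positivity) (by norm_num)]; nlinarith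
  · rw [div_pow, one_pow, mul_one_div, div_le_div_iff₀ (by positivity) (by norm_num)]; nlinarith

lemma ofReal_le_procMeasure_hull_inter_eq_empty {μ : Measure Pt} [IsProbabilityMeasure μ]
    (hμ : ∀ᵐ x ∂μ, x ∈ unitSquare)
    (hlower : ∀ a, 0 ≤ a → μ (lowerHalfPlane a) ≤ ENNReal.ofReal (a ^ 2))
    (hcorner : ENNReal.ofReal (1/16) ≤ μ upperCorner) {k t : ℕ} (i₀ : Fin k)
    (ht : 16 * (k + 1) ^ 2 ≤ t) :
    ENNReal.ofReal (1/64) ≤ procMeasure μ k t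
      {ω | convexHull ℝ (grp ω.1 (extSeq ω.2) t) ∩
          {x ∈ unitSquare | x 0 + x 1 ≤ 1 / (4 * (t : ℝ) ^ ((1 : ℝ) / 4))} = ∅} := by
  set r := (t : ℝ) ^ ((1 : ℝ) / 4)
  set δ := 1 / (4 * r)
  have ht0 : (0 : ℝ) < t := by exact_mod_cast (by positivity : 0 < 16 * (k + 1) ^ 2).trans_le ht
  have hr : 0 < r := Real.rpow_pos_of_pos ht0 _
  have hr4 : r ^ 4 = t := by
    rw [← Real.rpow_natCast, ← Real.rpow_mul ht0.le]; norm_num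
  obtain ⟨hδ8, hkδ, htδ⟩ := one_div_four_mul_bounds (Nat.cast_nonneg k) hr (by rw [hr4]; exact_mod_cast ht)
  rw [hr4] at htδ
  have hδ : 0 ≤ δ := (one_div_pos.2 (mul_pos four_pos hr)).le
  have hD1 : (k : ℝ≥0∞) * μ (lowerHalfPlane δ) ≤ ENNReal.ofReal (1/64) :=
    calc (k : ℝ≥0∞) * μ (lowerHalfPlane δ) ≤ k * ENNReal.ofReal (δ ^ 2) := by
          gcongr; exact hlower δ hδ
      _ = ENNReal.ofReal (k * δ ^ 2) := by
          rw [ENNReal.ofReal_mul (Nat.cast_nonneg k), ENNReal.ofReal_natCast]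
      _ ≤ ENNReal.ofReal (1/64) := ENNReal.ofReal_le_ofReal hkδ
  have hD2 : (t : ℝ≥0∞) * (μ.prod μ) (badPairs δ) ≤ ENNReal.ofReal (1/32) :=
    calc (t : ℝ≥0∞) * (μ.prod μ) (badPairs δ) ≤ t * ENNReal.ofReal (8 * δ ^ 4) := by
          gcongr; exact prod_badPairs_le hlower hδ
      _ = ENNReal.ofReal (1/32) := by
          rw [← htδ, ENNReal.ofReal_mul (Nat.cast_nonneg t), ENNReal.ofReal_natCast]
  refine ENNReal.le_of_add_le_add_right (a := ENNReal.ofReal (1/64) + ENNReal.ofReal (1/32))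
    (by simp) ?_
  calc ENNReal.ofReal (1/64) + (ENNReal.ofReal (1/64) + ENNReal.ofReal (1/32))
      = ENNReal.ofReal (1/16) := by
        rw [← ENNReal.ofReal_add (by norm_num) (by norm_num),
          ← ENNReal.ofReal_add (by norm_num) (by norm_num)]; norm_num
    _ ≤ μ upperCorner := hcorner
    _ ≤ _ := measure_upperCorner_le hμ hδ8 i₀
    _ ≤ _ := by rw [add_assoc]; gcongr

lemma volume_cube {ι : Type*} [Fintype ι] (p q : ℝ) :
    volume {x : EuclideanSpace ℝ ι | ∀ i, x i ∈ Icc p q} =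
      ENNReal.ofReal (q - p) ^ Fintype.card ι := by
  have hset : {x : EuclideanSpace ℝ ι | ∀ i, x i ∈ Icc p q} =
      (MeasurableEquiv.toLp 2 (ι → ℝ)).symm ⁻¹' (univ.pi fun _ => Icc p q) := by
    ext x
    simp only [mem_ofPred_eq, mem_preimage, mem_univ_pi, MeasurableEquiv.coe_toLp_symm]
  rw [hset, (EuclideanSpace.volume_preserving_symm_measurableEquiv_toLp ι).measure_preimage
    (MeasurableSet.univ_pi fun _ => measurableSet_Icc).nullMeasurableSet, volume_pi_pi]
  simp [Real.volume_Icc]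

lemma measurableSet_unitSquare : MeasurableSet unitSquare := by
  simp only [unitSquare, ofPred_forall]
  exact MeasurableSet.iInter fun i =>
    measurableSet_Icc.preimage ((measurable_pi_apply i).comp (WithLp.measurable_ofLp 2 _))

instance : IsProbabilityMeasure (volume.restrict unitSquare) :=
  ⟨by rw [Measure.restrict_apply_univ, unitSquare, volume_cube]; norm_num⟩

lemma volume_restrict_unitSquare_lowerHalfPlane_le {a : ℝ} (ha : 0 ≤ a) :
    volume.restrict unitSquare (lowerHalfPlane a) ≤ ENNReal.ofReal (a ^ 2) := by
  rw [Measure.restrict_apply' measurableSet_unitSquare]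
  calc volume (lowerHalfPlane a ∩ unitSquare) ≤ volume {x : Pt | ∀ i, x i ∈ Icc 0 a} := by
        refine measure_mono fun x ⟨(hxa : x 0 + x 1 ≤ a), hx⟩ i => ⟨(hx i).1, ?_⟩
        have := (hx 0).1; have := (hx 1).1
        fin_cases i <;> simp <;> linarith
    _ = ENNReal.ofReal (a ^ 2) := by rw [volume_cube, ENNReal.ofReal_pow ha]; simp

lemma volume_restrict_unitSquare_upperCorner :
    volume.restrict unitSquare upperCorner = ENNReal.ofReal (1/16) := by
  rw [Measure.restrict_apply' measurableSet_unitSquare,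
    inter_eq_left.2 fun x hx i => ⟨(by norm_num : (0 : ℝ) ≤ 3/4).trans (hx i).1, (hx i).2⟩,
    upperCorner, volume_cube, ← ENNReal.ofReal_pow (by norm_num)]
  norm_num

/-- For the consensus-voting group process on the unit square
`ℍ = [0,1]²` (with `k ≥ 1` uniform initial members and two i.i.d. uniform candidates per
round), and the corner caps `Aᵗ = {(x,y) ∈ ℍ : x + y ≤ 1/(4t^{1/4})}`, there are constants
`c > 0` and `τ ∈ ℕ` such that `Pr[Sᵗ ∩ Aᵗ = ∅] ≥ c` for every `t ≥ τ`, where `Sᵗ` is the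
convex hull of the group after `t` rounds. -/
theorem prob_hull_misses_corner_ge (k : ℕ) (hk : 1 ≤ k) :
    ∃ c : ℝ, 0 < c ∧ ∃ τ : ℕ, ∀ t : ℕ, τ ≤ t →
      ENNReal.ofReal c ≤
        procMeasure (volume.restrict unitSquare) k t
          {ω | convexHull ℝ (grp ω.1 (extSeq ω.2) t) ∩
              {x ∈ unitSquare | x 0 + x 1 ≤ 1 / (4 * (t : ℝ) ^ ((1 : ℝ) / 4))} = ∅} :=
  ⟨1/64, by norm_num, 16 * (k + 1) ^ 2, fun _ ht =>
    ofReal_le_procMeasure_hull_inter_eq_empty (ae_restrict_mem measurableSet_unitSquare)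
      (fun _ => volume_restrict_unitSquare_lowerHalfPlane_le)
      volume_restrict_unitSquare_upperCorner.ge ⟨0, hk⟩ ht⟩

end
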